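/- Fix a real constant α. Let Ĝ(R, v) be a smooth real-valued function of two real variables on an open set, and define G(w, w̄, v) := Ĝ(ln(w w̄), v) on the corresponding open subset of (ℂ \ {0}) × ℝ. Then G satisfies equation (alterform) if and only if Ĝ satisfies (Ĝ + Ĝ_{vv} − 2 sin α · Ĝ_v) Ĝ_{RR} − (e^{iα} Ĝ_R − i Ĝ_{vR})(e^{−iα} Ĝ_R + i Ĝ_{vR}) = 4 e^{R}. -/

import Mathlib

noncomputable section

/-- Wirtinger derivative ∂_w of a complex-valued function of (w, v) ∈ ℂ × ℝ. -/
def dw (G : ℂ → ℝ → ℂ) : ℂ → ℝ → ℂ := fun w v =>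
  ((fderiv ℝ (fun z => G z v) w 1) - Complex.I * (fderiv ℝ (fun z => G z v) w Complex.I)) / 2

/-- Wirtinger derivative ∂_{w̄} of a complex-valued function of (w, v) ∈ ℂ × ℝ. -/
def dwb (G : ℂ → ℝ → ℂ) : ℂ → ℝ → ℂ := fun w v =>
  ((fderiv ℝ (fun z => G z v) w 1) + Complex.I * (fderiv ℝ (fun z => G z v) w Complex.I)) / 2

/-- Partial derivative ∂_v of a complex-valued function of (w, v) ∈ ℂ × ℝ. -/
def dv (G : ℂ → ℝ → ℂ) : ℂ → ℝ → ℂ := fun w v => deriv (fun t => G w t) v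

/-- A real-valued function of (w, v), viewed as complex-valued. -/
def cx (G : ℂ → ℝ → ℝ) : ℂ → ℝ → ℂ := fun w v => (G w v : ℂ)

/-- Equation (alterform) at the point (w, v):
(G + G_{vv} − 2 G_v sin α) G_{ww̄}
  − (e^{iα} G_{w̄} − i G_{vw̄})(e^{−iα} G_w + i G_{vw}) = 4. -/
def Alterform (α : ℝ) (G : ℂ → ℝ → ℝ) (w : ℂ) (v : ℝ) : Prop :=
  (cx G w v + dv (dv (cx G)) w v - 2 * dv (cx G) w v * (Real.sin α : ℂ))
      * dwb (dw (cx G)) w v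
    - (Complex.exp (Complex.I * (α : ℂ)) * dwb (cx G) w v
        - Complex.I * dwb (dv (cx G)) w v)
      * (Complex.exp (-(Complex.I * (α : ℂ))) * dw (cx G) w v
        + Complex.I * dw (dv (cx G)) w v)
    = 4

/-- Partial derivatives of a function Ĝ(R, v) of two real variables. -/
def pR (H : ℝ → ℝ → ℝ) : ℝ → ℝ → ℝ := fun R v => deriv (fun s => H s v) R
def pv (H : ℝ → ℝ → ℝ) : ℝ → ℝ → ℝ := fun R v => deriv (fun s => H R s) v

open Complex Filter


/-! For `G = Ĝ(ln(w w̄), v)` the chain rule gives `G_w = Ĝ_R / w` and `G_{w̄} = Ĝ_R / w̄`, and since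
`1 / w` is holomorphic, `G_{ww̄} = Ĝ_{RR} / (w w̄)`; the `v`-derivatives pass through the
substitution. Every term of (alterform) thus carries the factor `1 / (w w̄) = e^{-R}`, and clearing
it gives the reduced equation. Every `R` is attained, at `w = e^{R/2}`. -/

open Complex ComplexConjugate Topology

/-- `u ↦ a u + b ū`: every ℝ-linear map `ℂ → ℂ` has this form, with `a = ∂_w` and `b = ∂_{w̄}`. -/
def wirtingerCLM (a b : ℂ) : ℂ →L[ℝ] ℂ :=
  a • ContinuousLinearMap.id ℝ ℂ + b • (conjCLE : ℂ →L[ℝ] ℂ)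

@[simp]
lemma wirtingerCLM_apply (a b u : ℂ) : wirtingerCLM a b u = a * u + b * conj u := by
  simp [wirtingerCLM]

section Wirtinger

variable {G : ℂ → ℝ → ℂ} {w a b : ℂ} {v : ℝ}

lemma dw_eq_of_hasFDerivAt (h : HasFDerivAt (fun z => G z v) (wirtingerCLM a b) w) :
    dw G w v = a := by
  simp only [dw, h.fderiv, wirtingerCLM_apply, conj_I, map_one]
  linear_combination (b - a) / 2 * I_sq

lemma dwb_eq_of_hasFDerivAt (h : HasFDerivAt (fun z => G z v) (wirtingerCLM a b) w) :
    dwb G w v = b := by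
  simp only [dwb, h.fderiv, wirtingerCLM_apply, conj_I, map_one]
  linear_combination (a - b) / 2 * I_sq

end Wirtinger

lemma HasDerivAt.hasFDerivAt_wirtingerCLM {g : ℂ → ℂ} {g' w : ℂ} (h : HasDerivAt g g' w) :
    HasFDerivAt g (wirtingerCLM g' 0) w := by
  refine (h.hasFDerivAt.restrictScalars ℝ).congr_fderiv ?_
  ext u
  simp [mul_comm]

lemma HasFDerivAt.mul_wirtingerCLM {f g : ℂ → ℂ} {w a b c d : ℂ}
    (hf : HasFDerivAt f (wirtingerCLM a b) w) (hg : HasFDerivAt g (wirtingerCLM c d) w) :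
    HasFDerivAt (fun z => f z * g z)
      (wirtingerCLM (a * g w + f w * c) (b * g w + f w * d)) w := by
  refine (hf.mul hg).congr_fderiv ?_
  ext u
  simp only [add_apply, smul_apply, wirtingerCLM_apply, smul_eq_mul]
  ring

/-- `d log (w w̄) = dw / w + dw̄ / w̄`. -/
lemma hasFDerivAt_ofReal_comp_log_normSq {h : ℝ → ℝ} {h' : ℝ} {w : ℂ} (hw : w ≠ 0)
    (hh : HasDerivAt h h' (Real.log (normSq w))) :
    HasFDerivAt (fun z => (h (Real.log (normSq z)) : ℂ))
      (wirtingerCLM (h' / w) (h' / conj w)) w := by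
  have hN : HasFDerivAt (fun z => normSq z) (2 • innerSL ℝ w) w := by
    simpa only [normSq_eq_norm_sq] using (hasStrictFDerivAt_norm_sq w).hasFDerivAt
  have hN0 : normSq w ≠ 0 := normSq_pos.2 hw |>.ne'
  have hcomp := ofRealCLM.hasFDerivAt.comp w
    (hh.comp_hasFDerivAt w ((Real.hasDerivAt_log hN0).comp_hasFDerivAt w hN))
  refine hcomp.congr_fderiv ?_
  have hw' : conj w ≠ 0 := (map_ne_zero _).2 hw
  ext u
  have hre : 2 * ((u * conj w).re : ℂ) = u * conj w + conj u * w := by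
    rw [re_eq_add_conj, map_mul, conj_conj]
    ring
  simp only [ContinuousLinearMap.comp_apply, smul_apply, innerSL_apply_apply, Complex.inner,
    ofRealCLM_apply, smul_eq_mul, wirtingerCLM_apply]
  push_cast
  rw [← mul_conj, nsmul_eq_mul, Nat.cast_ofNat, hre]
  field_simp

section Partials

variable {U : Set (ℝ × ℝ)} {H : ℝ → ℝ → ℝ} {R v : ℝ}

lemma hasDerivAt_fderiv_apply_fst (h : DifferentiableAt ℝ (fun p : ℝ × ℝ => H p.1 p.2) (R, v)) :
    HasDerivAt (fun s => H s v) (fderiv ℝ (fun p : ℝ × ℝ => H p.1 p.2) (R, v) (1, 0)) R :=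
  h.hasFDerivAt.comp_hasDerivAt (f := fun s => (s, v)) R
    ((hasDerivAt_id R).prodMk (hasDerivAt_const R v))

lemma hasDerivAt_fderiv_apply_snd (h : DifferentiableAt ℝ (fun p : ℝ × ℝ => H p.1 p.2) (R, v)) :
    HasDerivAt (fun t => H R t) (fderiv ℝ (fun p : ℝ × ℝ => H p.1 p.2) (R, v) (0, 1)) v :=
  h.hasFDerivAt.comp_hasDerivAt (f := fun t => (R, t)) v
    ((hasDerivAt_const v R).prodMk (hasDerivAt_id v))

lemma hasDerivAt_pR (h : DifferentiableAt ℝ (fun p : ℝ × ℝ => H p.1 p.2) (R, v)) :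
    HasDerivAt (fun s => H s v) (pR H R v) R :=
  (hasDerivAt_fderiv_apply_fst h).differentiableAt.hasDerivAt

lemma hasDerivAt_pv (h : DifferentiableAt ℝ (fun p : ℝ × ℝ => H p.1 p.2) (R, v)) :
    HasDerivAt (fun t => H R t) (pv H R v) v :=
  (hasDerivAt_fderiv_apply_snd h).differentiableAt.hasDerivAt

lemma ContDiffOn.differentiableAt_of_isOpen
    (hH : ContDiffOn ℝ (⊤ : ℕ∞) (fun p : ℝ × ℝ => H p.1 p.2) U) (hU : IsOpen U)
    (hp : (R, v) ∈ U) : DifferentiableAt ℝ (fun p : ℝ × ℝ => H p.1 p.2) (R, v) :=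
  (hH.contDiffAt (hU.mem_nhds hp)).differentiableAt (by simp)

lemma ContDiffOn.pR (hH : ContDiffOn ℝ (⊤ : ℕ∞) (fun p : ℝ × ℝ => H p.1 p.2) U)
    (hU : IsOpen U) : ContDiffOn ℝ (⊤ : ℕ∞) (fun p : ℝ × ℝ => pR H p.1 p.2) U :=
  ((hH.fderiv_of_isOpen hU (m := (⊤ : ℕ∞)) (by simp)).clm_apply contDiffOn_const).congr
    fun p hp => (hasDerivAt_fderiv_apply_fst (hH.differentiableAt_of_isOpen hU hp)).deriv

lemma ContDiffOn.pv (hH : ContDiffOn ℝ (⊤ : ℕ∞) (fun p : ℝ × ℝ => H p.1 p.2) U)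
    (hU : IsOpen U) : ContDiffOn ℝ (⊤ : ℕ∞) (fun p : ℝ × ℝ => pv H p.1 p.2) U :=
  ((hH.fderiv_of_isOpen hU (m := (⊤ : ℕ∞)) (by simp)).clm_apply contDiffOn_const).congr
    fun p hp => (hasDerivAt_fderiv_apply_snd (hH.differentiableAt_of_isOpen hU hp)).deriv

end Partials

/-- `G(w, w̄, v) = Ĝ(ln(w w̄), v)`. -/
def radialLift (H : ℝ → ℝ → ℝ) : ℂ → ℝ → ℝ := fun z t => H (Real.log (normSq z)) t

/-- The reduced equation for `Ĝ` at `(R, v)`. -/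
def RotationalAlterform (α : ℝ) (H : ℝ → ℝ → ℝ) (R v : ℝ) : Prop :=
  (((H R v + pv (pv H) R v - 2 * Real.sin α * pv H R v) : ℝ) : ℂ) * ((pR (pR H) R v : ℝ) : ℂ)
    - (exp (I * (α : ℂ)) * ((pR H R v : ℝ) : ℂ) - I * ((pR (pv H) R v : ℝ) : ℂ))
      * (exp (-(I * (α : ℂ))) * ((pR H R v : ℝ) : ℂ) + I * ((pR (pv H) R v : ℝ) : ℂ))
    = ((4 * Real.exp R : ℝ) : ℂ)

section RadialLift

variable {U : Set (ℝ × ℝ)} {H : ℝ → ℝ → ℝ} {w : ℂ} {v : ℝ}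

lemma eventually_ne_zero_and_mem (hU : IsOpen U) (hw : w ≠ 0)
    (hmem : (Real.log (normSq w), v) ∈ U) :
    ∀ᶠ z in 𝓝 w, z ≠ 0 ∧ (Real.log (normSq z), v) ∈ U := by
  have hcont : ContinuousAt (fun z => (Real.log (normSq z), v)) w :=
    ((Real.continuousAt_log (normSq_pos.2 hw).ne').comp continuous_normSq.continuousAt).prodMk
      continuousAt_const
  exact (eventually_ne_nhds hw).and (hcont.eventually_mem (hU.mem_nhds hmem))

lemma hasFDerivAt_radialLift (hw : w ≠ 0)
    (hH : DifferentiableAt ℝ (fun p : ℝ × ℝ => H p.1 p.2) (Real.log (normSq w), v)) :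
    HasFDerivAt (fun z => cx (radialLift H) z v)
      (wirtingerCLM (pR H (Real.log (normSq w)) v / w)
        (pR H (Real.log (normSq w)) v / conj w)) w :=
  hasFDerivAt_ofReal_comp_log_normSq hw (hasDerivAt_pR hH)

lemma hasDerivAt_radialLift
    (hH : DifferentiableAt ℝ (fun p : ℝ × ℝ => H p.1 p.2) (Real.log (normSq w), v)) :
    HasDerivAt (fun t => cx (radialLift H) w t) (pv H (Real.log (normSq w)) v) v :=
  (hasDerivAt_pv hH).ofReal_comp

lemma dv_radialLift (hH : ContDiffOn ℝ (⊤ : ℕ∞) (fun p : ℝ × ℝ => H p.1 p.2) U)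
    (hU : IsOpen U) (hmem : (Real.log (normSq w), v) ∈ U) :
    dv (cx (radialLift H)) w v = cx (radialLift (pv H)) w v :=
  (hasDerivAt_radialLift (hH.differentiableAt_of_isOpen hU hmem)).deriv

lemma dv_radialLift_eventuallyEq_nhds_snd
    (hH : ContDiffOn ℝ (⊤ : ℕ∞) (fun p : ℝ × ℝ => H p.1 p.2) U) (hU : IsOpen U)
    (hmem : (Real.log (normSq w), v) ∈ U) :
    (fun t => dv (cx (radialLift H)) w t) =ᶠ[𝓝 v] fun t => cx (radialLift (pv H)) w t := by
  have hcont : ContinuousAt (fun t => (Real.log (normSq w), t)) v :=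
    continuousAt_const.prodMk continuousAt_id
  exact (hcont.eventually_mem (hU.mem_nhds hmem)).mono fun t ht => dv_radialLift hH hU ht

lemma dv_radialLift_eventuallyEq_nhds_fst
    (hH : ContDiffOn ℝ (⊤ : ℕ∞) (fun p : ℝ × ℝ => H p.1 p.2) U) (hU : IsOpen U) (hw : w ≠ 0)
    (hmem : (Real.log (normSq w), v) ∈ U) :
    (fun z => dv (cx (radialLift H)) z v) =ᶠ[𝓝 w] fun z => cx (radialLift (pv H)) z v :=
  (eventually_ne_zero_and_mem hU hw hmem).mono fun _ hz => dv_radialLift hH hU hz.2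

lemma dw_radialLift_eventuallyEq
    (hH : ContDiffOn ℝ (⊤ : ℕ∞) (fun p : ℝ × ℝ => H p.1 p.2) U) (hU : IsOpen U) (hw : w ≠ 0)
    (hmem : (Real.log (normSq w), v) ∈ U) :
    (fun z => dw (cx (radialLift H)) z v) =ᶠ[𝓝 w] fun z => cx (radialLift (pR H)) z v * z⁻¹ :=
  (eventually_ne_zero_and_mem hU hw hmem).mono fun _ hz =>
    (dw_eq_of_hasFDerivAt
      (hasFDerivAt_radialLift hz.1 (hH.differentiableAt_of_isOpen hU hz.2))).trans
      (div_eq_mul_inv _ _)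

lemma alterform_radialLift_iff {α : ℝ}
    (hH : ContDiffOn ℝ (⊤ : ℕ∞) (fun p : ℝ × ℝ => H p.1 p.2) U) (hU : IsOpen U) (hw : w ≠ 0)
    (hmem : (Real.log (normSq w), v) ∈ U) :
    Alterform α (radialLift H) w v ↔ RotationalAlterform α H (Real.log (normSq w)) v := by
  have hd := hH.differentiableAt_of_isOpen hU hmem
  have hd_R := (hH.pR hU).differentiableAt_of_isOpen hU hmem
  have hd_v := (hH.pv hU).differentiableAt_of_isOpen hU hmem
  have h_w := dw_eq_of_hasFDerivAt (hasFDerivAt_radialLift hw hd)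
  have h_wb := dwb_eq_of_hasFDerivAt (hasFDerivAt_radialLift hw hd)
  have h_v := dv_radialLift hH hU hmem
  have h_vv : dv (dv (cx (radialLift H))) w v = _ :=
    ((hasDerivAt_radialLift hd_v).congr_of_eventuallyEq
      (dv_radialLift_eventuallyEq_nhds_snd hH hU hmem)).deriv
  have h_vw := dw_eq_of_hasFDerivAt ((hasFDerivAt_radialLift hw hd_v).congr_of_eventuallyEq
    (dv_radialLift_eventuallyEq_nhds_fst hH hU hw hmem))
  have h_vwb := dwb_eq_of_hasFDerivAt ((hasFDerivAt_radialLift hw hd_v).congr_of_eventuallyEq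
    (dv_radialLift_eventuallyEq_nhds_fst hH hU hw hmem))
  have h_wwb := dwb_eq_of_hasFDerivAt (((hasFDerivAt_radialLift hw hd_R).mul_wirtingerCLM
    (hasDerivAt_inv hw).hasFDerivAt_wirtingerCLM).congr_of_eventuallyEq
    (dw_radialLift_eventuallyEq hH hU hw hmem))
  unfold Alterform RotationalAlterform
  rw [h_w, h_wb, h_v, h_vv, h_vw, h_vwb, h_wwb, Real.exp_log (normSq_pos.2 hw)]
  have hw' : conj w ≠ 0 := (map_ne_zero _).2 hw
  simp only [cx, radialLift, ofReal_sub, ofReal_add, ofReal_mul, ofReal_ofNat, ← mul_conj]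
  constructor <;> intro h <;> field_simp at h ⊢ <;> linear_combination h

end RadialLift

/-- G(w, w̄, v) := Ĝ(ln(w w̄), v) satisfies (alterform)
iff Ĝ satisfies
(Ĝ + Ĝ_{vv} − 2 sin α Ĝ_v) Ĝ_{RR} − (e^{iα} Ĝ_R − i Ĝ_{vR})(e^{−iα} Ĝ_R + i Ĝ_{vR}) = 4 e^R. -/
theorem alterform_rotational_reduction (α : ℝ) (U₂ : Set (ℝ × ℝ)) (hU₂ : IsOpen U₂)
    (Ghat : ℝ → ℝ → ℝ)
    (hGhat : ContDiffOn ℝ (⊤ : ℕ∞) (fun p : ℝ × ℝ => Ghat p.1 p.2) U₂) :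
    (∀ w : ℂ, ∀ v : ℝ, w ≠ 0 → (Real.log (Complex.normSq w), v) ∈ U₂ →
        Alterform α (fun z t => Ghat (Real.log (Complex.normSq z)) t) w v)
    ↔ (∀ R v : ℝ, (R, v) ∈ U₂ →
        (((Ghat R v + pv (pv Ghat) R v - 2 * Real.sin α * pv Ghat R v) : ℝ) : ℂ)
            * ((pR (pR Ghat) R v : ℝ) : ℂ)
          - (Complex.exp (Complex.I * (α : ℂ)) * ((pR Ghat R v : ℝ) : ℂ)
              - Complex.I * ((pR (pv Ghat) R v : ℝ) : ℂ))
            * (Complex.exp (-(Complex.I * (α : ℂ))) * ((pR Ghat R v : ℝ) : ℂ)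
              + Complex.I * ((pR (pv Ghat) R v : ℝ) : ℂ))
          = ((4 * Real.exp R : ℝ) : ℂ)) := by
  constructor
  · intro h R v hmem
    have hw : ((Real.exp (R / 2) : ℝ) : ℂ) ≠ 0 := ofReal_ne_zero.2 (Real.exp_pos _).ne'
    have hR : Real.log (normSq (Real.exp (R / 2) : ℂ)) = R := by
      rw [normSq_ofReal, ← Real.exp_add, add_halves, Real.log_exp]
    rw [← hR] at hmem ⊢
    exact (alterform_radialLift_iff hGhat hU₂ hw hmem).1 (h _ v hw hmem)
  · intro h w v hw hmem
    exact (alterform_radialLift_iff hGhat hU₂ hw hmem).2 (h _ v hmem)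

end
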